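/- Let (u₁,v₁) and (u₂,v₂) be ε-relatively close δ-squares, and let (s,t) be a δ′-square with O^λ_s = O^γ_t. Then (u₁s, v₁t) and (u₂s, v₂t) are (δ+δ′)-squares and are ε′-relatively close, where ε′ = e^{δ′}·λ_s^{−1}·(ε + 2·e^{ε+δ}·|e^{ε} − 1|). -/

import Mathlib

/-!
Appending `s` and `t` multiplies the ratios `λ_{uᵢ}`, `γ_{vᵢ}` by `λ_s`, `γ_t`, so squares
compose by multiplying ratios and the ratio conditions of relative closeness persist. The
coding map along a word `u` is the similarity `x ↦ O_u λ_u x + c_u`, hence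
`L(u₁s1̄, v₁t1̄) - L(u₂s1̄, v₂t1̄)` differs from `L(u₁1̄, v₁1̄) - L(u₂1̄, v₂1̄)` by
`O_{u₁}(λ_{u₁} - λ_{u₂})(Π_λ(s1̄) - Π_λ(1̄))` and its `γ`-analogue. Each is at most
`(e^ε - 1) e^δ m D`, where `m` is the least of the four ratios, because `λ_{uᵢ}` and `γ_{vᵢ}`
agree up to the factor `e^δ`. Finally the least ratio after appending is at least
`e^{-δ'} λ_s m`.
-/

open Real Set

/-- Product of the contraction ratios (or orientations) along a finite word. -/
def wprod {n : ℕ} (f : Fin n → ℝ) (u : List (Fin n)) : ℝ := (u.map f).prod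

/-- The infinite sequence obtained by appending the sequence `ω` to the word `u`. -/
def wcat {n : ℕ} (u : List (Fin n)) (ω : ℕ → Fin n) : ℕ → Fin n :=
  fun k => if h : k < u.length then u.get ⟨k, h⟩ else ω (k - u.length)

/-- `(u,v)` is a `δ`-square: `λ_u/γ_v ∈ (e^{-δ}, e^{δ})`. -/
def IsSq {A B : ℕ} (lam : Fin A → ℝ) (gam : Fin B → ℝ) (δ : ℝ)
    (u : List (Fin A)) (v : List (Fin B)) : Prop :=
  wprod lam u / wprod gam v ∈ Set.Ioo (Real.exp (-δ)) (Real.exp δ)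

/-- `(u₁,v₁)` and `(u₂,v₂)` are `ε`-relatively close (Definition 2.2), where
`L(ω,τ) = Π_λ(ω) + Π_γ(τ)` and `1̄` is realized as the constant sequence `0`. -/
def RelClose {A B : ℕ} (lam Ol : Fin (A + 1) → ℝ) (gam Og : Fin (B + 1) → ℝ)
    (Pl : (ℕ → Fin (A + 1)) → ℝ) (Pg : (ℕ → Fin (B + 1)) → ℝ) (D ε : ℝ)
    (u1 : List (Fin (A + 1))) (v1 : List (Fin (B + 1)))
    (u2 : List (Fin (A + 1))) (v2 : List (Fin (B + 1))) : Prop :=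
  wprod lam u1 / wprod lam u2 ∈ Set.Ioo (Real.exp (-ε)) (Real.exp ε) ∧
  wprod gam v1 / wprod gam v2 ∈ Set.Ioo (Real.exp (-ε)) (Real.exp ε) ∧
  wprod Ol u1 = wprod Ol u2 ∧ wprod Og v1 = wprod Og v2 ∧
  |(Pl (wcat u1 fun _ => 0) + Pg (wcat v1 fun _ => 0)) -
      (Pl (wcat u2 fun _ => 0) + Pg (wcat v2 fun _ => 0))| <
    ε * D * min (min (wprod lam u1) (wprod lam u2)) (min (wprod gam v1) (wprod gam v2))

section Words

variable {n : ℕ}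

@[simp] lemma wprod_nil (f : Fin n → ℝ) : wprod f [] = 1 := rfl

@[simp] lemma wprod_cons (f : Fin n → ℝ) (i : Fin n) (u : List (Fin n)) :
    wprod f (i :: u) = f i * wprod f u := by simp [wprod]

@[simp] lemma wprod_append (f : Fin n → ℝ) (u s : List (Fin n)) :
    wprod f (u ++ s) = wprod f u * wprod f s := by simp [wprod]

lemma wprod_pos {f : Fin n → ℝ} (hf : ∀ i, 0 < f i) (u : List (Fin n)) : 0 < wprod f u :=
  List.prod_pos (by simpa using fun i _ => hf i)

lemma wprod_le_one {f : Fin n → ℝ} (hf : ∀ i, f i ∈ Ioo (0 : ℝ) 1) (u : List (Fin n)) :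
    wprod f u ≤ 1 := by
  induction u with
  | nil => simp
  | cons i u ih =>
    rw [wprod_cons]
    exact mul_le_one₀ (hf i).2.le (wprod_pos (fun j => (hf j).1) u).le ih

lemma abs_wprod_of_sign {f : Fin n → ℝ} (hf : ∀ i, f i = 1 ∨ f i = -1) (u : List (Fin n)) :
    |wprod f u| = 1 := by
  induction u with
  | nil => simp
  | cons i u ih => rcases hf i with h | h <;> simp [h, ih]

@[simp] lemma wcat_cons_zero (i : Fin n) (u : List (Fin n)) (ω : ℕ → Fin n) :
    wcat (i :: u) ω 0 = i := by simp [wcat]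

@[simp] lemma wcat_cons_succ (i : Fin n) (u : List (Fin n)) (ω : ℕ → Fin n) (k : ℕ) :
    wcat (i :: u) ω (k + 1) = wcat u ω k := by
  by_cases h : k < u.length
  · simp [wcat, h]
  · simp [wcat, h, Nat.add_sub_add_right]

@[simp] lemma wcat_nil (ω : ℕ → Fin n) : wcat [] ω = ω := by
  funext k; simp [wcat]

lemma wcat_append (u s : List (Fin n)) (ω : ℕ → Fin n) :
    wcat (u ++ s) ω = wcat u (wcat s ω) := by
  induction u with
  | nil => simp
  | cons i u ih =>
    funext k
    cases k with
    | zero => simp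
    | succ k => simp [ih]

end Words

section Coding

variable {n : ℕ} {lam O b : Fin n → ℝ} {P : (ℕ → Fin n) → ℝ}

lemma coding_wcat_sub
    (hP : ∀ ω, P ω = O (ω 0) * lam (ω 0) * P (fun k => ω (k + 1)) + b (ω 0))
    (u : List (Fin n)) (ω ω' : ℕ → Fin n) :
    P (wcat u ω) - P (wcat u ω') = wprod O u * wprod lam u * (P ω - P ω') := by
  induction u with
  | nil => simp
  | cons i u ih =>
    rw [hP (wcat _ ω), hP (wcat _ ω')]
    simp only [wcat_cons_zero, wcat_cons_succ, wprod_cons]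
    linear_combination O i * lam i * ih

lemma coding_append_sub
    (hP : ∀ ω, P ω = O (ω 0) * lam (ω 0) * P (fun k => ω (k + 1)) + b (ω 0))
    {u₁ u₂ : List (Fin n)} (hO : wprod O u₁ = wprod O u₂) (s : List (Fin n)) (ω : ℕ → Fin n) :
    P (wcat (u₁ ++ s) ω) - P (wcat (u₂ ++ s) ω) =
      P (wcat u₁ ω) - P (wcat u₂ ω) +
        wprod O u₁ * (wprod lam u₁ - wprod lam u₂) * (P (wcat s ω) - P ω) := by
  rw [wcat_append, wcat_append]
  linear_combination coding_wcat_sub hP u₁ (wcat s ω) ω - coding_wcat_sub hP u₂ (wcat s ω) ω +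
    (wprod lam u₂ * (P (wcat s ω) - P ω)) * hO

lemma abs_coding_append_sub_sub_le
    (hP : ∀ ω, P ω = O (ω 0) * lam (ω 0) * P (fun k => ω (k + 1)) + b (ω 0))
    (hO : ∀ i, O i = 1 ∨ O i = -1) {D : ℝ} (hPD : ∀ ω, P ω ∈ Icc 0 D)
    {u₁ u₂ : List (Fin n)} (hOu : wprod O u₁ = wprod O u₂) (s : List (Fin n)) (ω : ℕ → Fin n) :
    |P (wcat (u₁ ++ s) ω) - P (wcat (u₂ ++ s) ω) - (P (wcat u₁ ω) - P (wcat u₂ ω))| ≤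
      |wprod lam u₁ - wprod lam u₂| * D := by
  rw [coding_append_sub hP hOu, add_sub_cancel_left, abs_mul, abs_mul, abs_wprod_of_sign hO,
    one_mul]
  gcongr
  simpa [Real.dist_eq] using Real.dist_le_of_mem_Icc (hPD (wcat s ω)) (hPD ω)

end Coding

lemma mul_div_mul_mem_Ioo_exp {a b c d x y : ℝ}
    (h₁ : a / b ∈ Ioo (exp (-x)) (exp x)) (h₂ : c / d ∈ Ioo (exp (-y)) (exp y)) :
    a * c / (b * d) ∈ Ioo (exp (-(x + y))) (exp (x + y)) := by
  rw [← div_mul_div_comm, neg_add, exp_add, exp_add]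
  exact ⟨mul_lt_mul'' h₁.1 h₂.1 (exp_pos _).le (exp_pos _).le,
    mul_lt_mul'' h₁.2 h₂.2 ((exp_pos _).le.trans h₁.1.le) ((exp_pos _).le.trans h₂.1.le)⟩

lemma mem_Ioo_exp_of_le {r x y : ℝ} (hxy : x ≤ y) (h : r ∈ Ioo (exp (-x)) (exp x)) :
    r ∈ Ioo (exp (-y)) (exp y) :=
  ⟨(exp_le_exp.2 (neg_le_neg hxy)).trans_lt h.1, h.2.trans_le (exp_le_exp.2 hxy)⟩

lemma lt_exp_mul_of_div_mem_Ioo_exp {a b x : ℝ} (hb : 0 < b)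
    (h : a / b ∈ Ioo (exp (-x)) (exp x)) : a < exp x * b ∧ b < exp x * a := by
  constructor
  · exact (div_lt_iff₀ hb).1 h.2
  · have := (lt_div_iff₀ hb).1 h.1
    rwa [exp_neg, inv_mul_lt_iff₀ (exp_pos x)] at this

lemma abs_sub_le_of_div_mem_Ioo_exp {a b x : ℝ} (hb : 0 < b)
    (h : a / b ∈ Ioo (exp (-x)) (exp x)) : |a - b| ≤ (exp x - 1) * min a b := by
  obtain ⟨hab, hba⟩ := lt_exp_mul_of_div_mem_Ioo_exp hb h
  rcases le_total a b with hle | hle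
  · rw [min_eq_left hle, abs_sub_comm, abs_of_nonneg (sub_nonneg.2 hle)]
    linarith
  · rw [min_eq_right hle, abs_of_nonneg (sub_nonneg.2 hle)]
    linarith

lemma abs_add_sub_add_le (a₁ a₂ b₁ b₂ a₁' a₂' b₁' b₂' : ℝ) :
    |a₁' + b₁' - (a₂' + b₂')| ≤
      |a₁ + b₁ - (a₂ + b₂)| + |a₁' - a₂' - (a₁ - a₂)| + |b₁' - b₂' - (b₁ - b₂)| := by
  calc _ = |(a₁ + b₁ - (a₂ + b₂)) + (a₁' - a₂' - (a₁ - a₂)) + (b₁' - b₂' - (b₁ - b₂))| := by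
        ring_nf
    _ ≤ _ := abs_add_three _ _ _

lemma min_le_mul_min_min {a₁ a₂ b₁ b₂ c : ℝ} (hc : 1 ≤ c) (ha : 0 ≤ min a₁ a₂)
    (h₁ : a₁ ≤ c * b₁) (h₂ : a₂ ≤ c * b₂) :
    min a₁ a₂ ≤ c * min (min a₁ a₂) (min b₁ b₂) := by
  have hc₀ : 0 ≤ c := zero_le_one.trans hc
  rw [mul_min_of_nonneg (min a₁ a₂) _ hc₀, mul_min_of_nonneg b₁ b₂ hc₀]
  exact le_min (le_mul_of_one_le_left ha hc)
    (le_min ((min_le_left _ _).trans h₁) ((min_le_right _ _).trans h₂))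

lemma mul_min_min_le {a₁ a₂ b₁ b₂ x y c : ℝ} (hc : 1 ≤ c) (hx : 0 ≤ x) (hy : 0 ≤ y)
    (hxy : x ≤ c * y) (ha : 0 ≤ min a₁ a₂) (hb : 0 ≤ min b₁ b₂) :
    x * min (min a₁ a₂) (min b₁ b₂) ≤
      c * min (min (a₁ * x) (a₂ * x)) (min (b₁ * y) (b₂ * y)) := by
  rw [← min_mul_of_nonneg _ _ hx, ← min_mul_of_nonneg _ _ hy,
    mul_min_of_nonneg _ _ (zero_le_one.trans hc)]
  refine le_min ?_ ?_
  · calc x * min (min a₁ a₂) (min b₁ b₂) ≤ x * min a₁ a₂ :=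
          mul_le_mul_of_nonneg_left (min_le_left _ _) hx
      _ = min a₁ a₂ * x := mul_comm _ _
      _ ≤ c * (min a₁ a₂ * x) := le_mul_of_one_le_left (mul_nonneg ha hx) hc
  · calc x * min (min a₁ a₂) (min b₁ b₂) ≤ x * min b₁ b₂ :=
          mul_le_mul_of_nonneg_left (min_le_right _ _) hx
      _ ≤ c * y * min b₁ b₂ := by gcongr
      _ = c * (min b₁ b₂ * y) := by ring

lemma IsSq.append {A B : ℕ} {lam : Fin A → ℝ} {gam : Fin B → ℝ} {δ δ' : ℝ}
    {u s : List (Fin A)} {v t : List (Fin B)}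
    (h : IsSq lam gam δ u v) (h' : IsSq lam gam δ' s t) :
    IsSq lam gam (δ + δ') (u ++ s) (v ++ t) := by
  unfold IsSq at *
  rw [wprod_append, wprod_append]
  exact mul_div_mul_mem_Ioo_exp h h'

/-- `L(u1̄, v1̄)` in the notation of `RelClose`. -/
def codeSum {A B : ℕ} (Pl : (ℕ → Fin (A + 1)) → ℝ) (Pg : (ℕ → Fin (B + 1)) → ℝ)
    (u : List (Fin (A + 1))) (v : List (Fin (B + 1))) : ℝ :=
  Pl (wcat u fun _ => 0) + Pg (wcat v fun _ => 0)

section RelClose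

variable {A B : ℕ} {lam Ol bl : Fin (A + 1) → ℝ} {gam Og bg : Fin (B + 1) → ℝ}
  {Pl : (ℕ → Fin (A + 1)) → ℝ} {Pg : (ℕ → Fin (B + 1)) → ℝ} {D ε δ δ' : ℝ}
  {u₁ u₂ s : List (Fin (A + 1))} {v₁ v₂ t : List (Fin (B + 1))}

lemma abs_codeSum_append_sub_le
    (hPl : ∀ ω, Pl ω = Ol (ω 0) * lam (ω 0) * Pl (fun n => ω (n + 1)) + bl (ω 0))
    (hPg : ∀ τ, Pg τ = Og (τ 0) * gam (τ 0) * Pg (fun n => τ (n + 1)) + bg (τ 0))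
    (hOl : ∀ i, Ol i = 1 ∨ Ol i = -1) (hOg : ∀ j, Og j = 1 ∨ Og j = -1)
    (hrl : ∀ ω, Pl ω ∈ Icc 0 D) (hrg : ∀ τ, Pg τ ∈ Icc 0 D)
    (hOu : wprod Ol u₁ = wprod Ol u₂) (hOv : wprod Og v₁ = wprod Og v₂) :
    |codeSum Pl Pg (u₁ ++ s) (v₁ ++ t) - codeSum Pl Pg (u₂ ++ s) (v₂ ++ t)| ≤
      |codeSum Pl Pg u₁ v₁ - codeSum Pl Pg u₂ v₂| +
        |wprod lam u₁ - wprod lam u₂| * D + |wprod gam v₁ - wprod gam v₂| * D := by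
  have hl := abs_coding_append_sub_sub_le hPl hOl hrl hOu s fun _ => 0
  have hg := abs_coding_append_sub_sub_le hPg hOg hrg hOv t fun _ => 0
  exact (abs_add_sub_add_le _ _ _ _ _ _ _ _).trans (add_le_add (add_le_add le_rfl hl) hg)

lemma abs_sub_add_abs_sub_le (hlam : ∀ i, 0 < lam i) (hgam : ∀ j, 0 < gam j)
    (hε : 0 ≤ ε) (hδ : 0 ≤ δ)
    (hsq₁ : IsSq lam gam δ u₁ v₁) (hsq₂ : IsSq lam gam δ u₂ v₂)
    (hl : wprod lam u₁ / wprod lam u₂ ∈ Ioo (exp (-ε)) (exp ε))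
    (hg : wprod gam v₁ / wprod gam v₂ ∈ Ioo (exp (-ε)) (exp ε)) :
    |wprod lam u₁ - wprod lam u₂| + |wprod gam v₁ - wprod gam v₂| ≤
      2 * (exp ε - 1) * exp δ *
        min (min (wprod lam u₁) (wprod lam u₂)) (min (wprod gam v₁) (wprod gam v₂)) := by
  have hg₁ := wprod_pos hgam v₁
  have hg₂ := wprod_pos hgam v₂
  have hl₂ := wprod_pos hlam u₂
  obtain ⟨hlg₁, hgl₁⟩ := lt_exp_mul_of_div_mem_Ioo_exp hg₁ hsq₁
  obtain ⟨hlg₂, hgl₂⟩ := lt_exp_mul_of_div_mem_Ioo_exp hg₂ hsq₂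
  have hε₁ : 0 ≤ exp ε - 1 := sub_nonneg.2 (one_le_exp hε)
  have hminl := min_le_mul_min_min (one_le_exp hδ)
    (le_min (wprod_pos hlam u₁).le hl₂.le) hlg₁.le hlg₂.le
  have hming := min_le_mul_min_min (one_le_exp hδ) (le_min hg₁.le hg₂.le) hgl₁.le hgl₂.le
  rw [min_comm (min (wprod gam v₁) _)] at hming
  have hl' := mul_le_mul_of_nonneg_left hminl hε₁
  have hg' := mul_le_mul_of_nonneg_left hming hε₁
  linarith [abs_sub_le_of_div_mem_Ioo_exp hl₂ hl, abs_sub_le_of_div_mem_Ioo_exp hg₂ hg]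

lemma abs_codeSum_append_sub_lt (hlam : ∀ i, 0 < lam i) (hgam : ∀ j, 0 < gam j)
    (hOl : ∀ i, Ol i = 1 ∨ Ol i = -1) (hOg : ∀ j, Og j = 1 ∨ Og j = -1)
    (hPl : ∀ ω, Pl ω = Ol (ω 0) * lam (ω 0) * Pl (fun n => ω (n + 1)) + bl (ω 0))
    (hPg : ∀ τ, Pg τ = Og (τ 0) * gam (τ 0) * Pg (fun n => τ (n + 1)) + bg (τ 0))
    (hD : 0 ≤ D) (hrl : ∀ ω, Pl ω ∈ Icc 0 D) (hrg : ∀ τ, Pg τ ∈ Icc 0 D)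
    (hε : 0 ≤ ε) (hδ : 0 ≤ δ)
    (hsq₁ : IsSq lam gam δ u₁ v₁) (hsq₂ : IsSq lam gam δ u₂ v₂)
    (hrc : RelClose lam Ol gam Og Pl Pg D ε u₁ v₁ u₂ v₂) :
    |codeSum Pl Pg (u₁ ++ s) (v₁ ++ t) - codeSum Pl Pg (u₂ ++ s) (v₂ ++ t)| <
      (ε + 2 * exp (ε + δ) * |exp ε - 1|) * D *
        min (min (wprod lam u₁) (wprod lam u₂)) (min (wprod gam v₁) (wprod gam v₂)) := by
  obtain ⟨hl, hg, hOu, hOv, hL⟩ := hrc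
  set m := min (min (wprod lam u₁) (wprod lam u₂)) (min (wprod gam v₁) (wprod gam v₂))
  have hm : 0 ≤ m := le_min (le_min (wprod_pos hlam u₁).le (wprod_pos hlam u₂).le)
    (le_min (wprod_pos hgam v₁).le (wprod_pos hgam v₂).le)
  have hL' : |codeSum Pl Pg u₁ v₁ - codeSum Pl Pg u₂ v₂| < ε * D * m := hL
  have hsum := mul_le_mul_of_nonneg_right
    (abs_sub_add_abs_sub_le hlam hgam hε hδ hsq₁ hsq₂ hl hg) hD
  have hexp : (exp ε - 1) * exp δ ≤ exp (ε + δ) * |exp ε - 1| := by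
    rw [exp_add, abs_of_nonneg (sub_nonneg.2 (one_le_exp hε))]
    nlinarith [mul_nonneg (sq_nonneg (exp ε - 1)) (exp_pos δ).le]
  have hexpDm := mul_le_mul_of_nonneg_right hexp (mul_nonneg hD hm)
  calc _ ≤ _ := abs_codeSum_append_sub_le (s := s) (t := t) hPl hPg hOl hOg hrl hrg hOu hOv
    _ < ε * D * m + 2 * (exp ε - 1) * exp δ * m * D := by linarith
    _ ≤ _ := by linarith

theorem RelClose.append (hlam : ∀ i, lam i ∈ Ioo (0 : ℝ) 1) (hgam : ∀ j, 0 < gam j)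
    (hOl : ∀ i, Ol i = 1 ∨ Ol i = -1) (hOg : ∀ j, Og j = 1 ∨ Og j = -1)
    (hPl : ∀ ω, Pl ω = Ol (ω 0) * lam (ω 0) * Pl (fun n => ω (n + 1)) + bl (ω 0))
    (hPg : ∀ τ, Pg τ = Og (τ 0) * gam (τ 0) * Pg (fun n => τ (n + 1)) + bg (τ 0))
    (hD : 0 ≤ D) (hrl : ∀ ω, Pl ω ∈ Icc 0 D) (hrg : ∀ τ, Pg τ ∈ Icc 0 D)
    (hε : 0 ≤ ε) (hδ : 0 ≤ δ) (hδ' : 0 ≤ δ')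
    (hsq₁ : IsSq lam gam δ u₁ v₁) (hsq₂ : IsSq lam gam δ u₂ v₂)
    (hrc : RelClose lam Ol gam Og Pl Pg D ε u₁ v₁ u₂ v₂) (hst : IsSq lam gam δ' s t) :
    RelClose lam Ol gam Og Pl Pg D
      (exp δ' * (wprod lam s)⁻¹ * (ε + 2 * exp (ε + δ) * |exp ε - 1|))
      (u₁ ++ s) (v₁ ++ t) (u₂ ++ s) (v₂ ++ t) := by
  have hlam₀ : ∀ i, 0 < lam i := fun i => (hlam i).1
  have hls := wprod_pos hlam₀ s
  have hgt := wprod_pos hgam t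
  have hest := abs_codeSum_append_sub_lt (s := s) (t := t) hlam₀ hgam hOl hOg hPl hPg hD hrl hrg
    hε hδ hsq₁ hsq₂ hrc
  set K := ε + 2 * exp (ε + δ) * |exp ε - 1|
  have hεK : ε ≤ K := le_add_of_nonneg_right (by positivity)
  have hscale : 1 ≤ exp δ' * (wprod lam s)⁻¹ :=
    one_le_mul_of_one_le_of_one_le (one_le_exp hδ') ((one_le_inv₀ hls).2 (wprod_le_one hlam s))
  have hεε' : ε ≤ exp δ' * (wprod lam s)⁻¹ * K :=
    hεK.trans (le_mul_of_one_le_left (hε.trans hεK) hscale)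
  obtain ⟨hl, hg, hOu, hOv, -⟩ := hrc
  refine ⟨?_, ?_, by simp [hOu], by simp [hOv], ?_⟩
  · rw [wprod_append, wprod_append, mul_div_mul_right _ _ hls.ne']
    exact mem_Ioo_exp_of_le hεε' hl
  · rw [wprod_append, wprod_append, mul_div_mul_right _ _ hgt.ne']
    exact mem_Ioo_exp_of_le hεε' hg
  · have hmin := mul_min_min_le (one_le_exp hδ') hls.le hgt.le
      (lt_exp_mul_of_div_mem_Ioo_exp hgt hst).1.le
      (le_min (wprod_pos hlam₀ u₁).le (wprod_pos hlam₀ u₂).le)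
      (le_min (wprod_pos hgam v₁).le (wprod_pos hgam v₂).le)
    simp only [wprod_append]
    refine hest.trans_le ?_
    have hKD : 0 ≤ K * D := mul_nonneg (hε.trans hεK) hD
    calc _ = K * D * ((wprod lam s)⁻¹ * (wprod lam s * _)) := by
          rw [inv_mul_cancel_left₀ hls.ne']
      _ ≤ K * D * ((wprod lam s)⁻¹ * (exp δ' * _)) := by gcongr
      _ = _ := by ring

end RelClose

theorem stmt18_general (A B : ℕ)
    (lam Ol bl : Fin (A + 1) → ℝ) (gam Og bg : Fin (B + 1) → ℝ)
    (hlam : ∀ i, lam i ∈ Set.Ioo (0:ℝ) 1) (hgam : ∀ j, gam j ∈ Set.Ioo (0:ℝ) 1)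
    (hOl : ∀ i, Ol i = 1 ∨ Ol i = -1) (hOg : ∀ j, Og j = 1 ∨ Og j = -1)
    (Pl : (ℕ → Fin (A + 1)) → ℝ) (Pg : (ℕ → Fin (B + 1)) → ℝ)
    (hPl : ∀ ω, Pl ω = Ol (ω 0) * lam (ω 0) * Pl (fun n => ω (n + 1)) + bl (ω 0))
    (hPg : ∀ τ, Pg τ = Og (τ 0) * gam (τ 0) * Pg (fun n => τ (n + 1)) + bg (τ 0))
    (D : ℝ) (hD : 0 < D)
    (hrl : ∀ ω, Pl ω ∈ Set.Icc 0 D) (hrg : ∀ τ, Pg τ ∈ Set.Icc 0 D)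
    (ε δ δ' : ℝ) (hε : 0 < ε) (hδ : 0 < δ) (hδ' : 0 < δ')
    (u1 u2 s : List (Fin (A + 1))) (v1 v2 t : List (Fin (B + 1)))
    (hsq1 : IsSq lam gam δ u1 v1) (hsq2 : IsSq lam gam δ u2 v2)
    (hrc : RelClose lam Ol gam Og Pl Pg D ε u1 v1 u2 v2)
    (hst : IsSq lam gam δ' s t) :
    IsSq lam gam (δ + δ') (u1 ++ s) (v1 ++ t) ∧
    IsSq lam gam (δ + δ') (u2 ++ s) (v2 ++ t) ∧
    RelClose lam Ol gam Og Pl Pg D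
      (Real.exp δ' * (wprod lam s)⁻¹ * (ε + 2 * Real.exp (ε + δ) * |Real.exp ε - 1|))
      (u1 ++ s) (v1 ++ t) (u2 ++ s) (v2 ++ t) :=
  ⟨hsq1.append hst, hsq2.append hst,
    hrc.append hlam (fun j => (hgam j).1) hOl hOg hPl hPg hD.le hrl hrg hε.le hδ.le hδ'.le
      hsq1 hsq2 hst⟩

/-- Lemma 2.2: appending a `δ′`-square `(s,t)` with `O^λ_s = O^γ_t` to two
`ε`-relatively close `δ`-squares yields `(δ+δ′)`-squares that are
`e^{δ′} λ_s^{-1} (ε + 2 e^{ε+δ} |e^{ε}-1|)`-relatively close. -/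
theorem stmt18 (A B : ℕ)
    (lam Ol bl : Fin (A + 1) → ℝ) (gam Og bg : Fin (B + 1) → ℝ)
    (hlam : ∀ i, lam i ∈ Set.Ioo (0:ℝ) 1) (hgam : ∀ j, gam j ∈ Set.Ioo (0:ℝ) 1)
    (hOl : ∀ i, Ol i = 1 ∨ Ol i = -1) (hOg : ∀ j, Og j = 1 ∨ Og j = -1)
    (Pl : (ℕ → Fin (A + 1)) → ℝ) (Pg : (ℕ → Fin (B + 1)) → ℝ)
    (hPl : ∀ ω, Pl ω = Ol (ω 0) * lam (ω 0) * Pl (fun n => ω (n + 1)) + bl (ω 0))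
    (hPg : ∀ τ, Pg τ = Og (τ 0) * gam (τ 0) * Pg (fun n => τ (n + 1)) + bg (τ 0))
    (D : ℝ) (hD : 0 < D)
    (hrl : ∀ ω, Pl ω ∈ Set.Icc 0 D) (hrg : ∀ τ, Pg τ ∈ Set.Icc 0 D)
    (ε δ δ' : ℝ) (hε : 0 < ε) (hδ : 0 < δ) (hδ' : 0 < δ')
    (u1 u2 s : List (Fin (A + 1))) (v1 v2 t : List (Fin (B + 1)))
    (hsq1 : IsSq lam gam δ u1 v1) (hsq2 : IsSq lam gam δ u2 v2)
    (hrc : RelClose lam Ol gam Og Pl Pg D ε u1 v1 u2 v2)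
    (hst : IsSq lam gam δ' s t) (hOst : wprod Ol s = wprod Og t) :
    IsSq lam gam (δ + δ') (u1 ++ s) (v1 ++ t) ∧
    IsSq lam gam (δ + δ') (u2 ++ s) (v2 ++ t) ∧
    RelClose lam Ol gam Og Pl Pg D
      (Real.exp δ' * (wprod lam s)⁻¹ * (ε + 2 * Real.exp (ε + δ) * |Real.exp ε - 1|))
      (u1 ++ s) (v1 ++ t) (u2 ++ s) (v2 ++ t) :=
  stmt18_general A B lam Ol bl gam Og bg hlam hgam hOl hOg Pl Pg hPl hPg D hD hrl hrg ε δ δ' hε hδ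
    hδ' u1 u2 s v1 v2 t hsq1 hsq2 hrc hst
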